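/- arXiv:2407.07069 — 2 statements merged into one kernel-verified Lean document; each statement's English description precedes it below -/
import Mathlib

section
/- Let H be a Hilbert space, S a bounded projection on H, and M a bounded self-adjoint-type operator such that M + S is invertible on H, and define B = S − S(M+S)^{-1}S restricted to the range of S. If B is invertible on SH with inverse B^{-1}, then M is invertible on H and M^{-1} = (M+S)^{-1} + (M+S)^{-1} S B^{-1} S (M+S)^{-1}. -/
/-!
Write `R = (M + S)⁻¹` and `X = R + R S B⁻¹ S R`. Since `M = (M + S) - S`, expanding `M X` and
`X M` leaves only terms in which `(S - S R S) B⁻¹` or `B⁻¹ (S - S R S)` occurs; both equal `S`,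
and then `S² = S` makes everything but `1` cancel. So `X` is a two-sided inverse of `M`, an
identity valid in any ring.
-/

section JensenNenciu

variable {α : Type*} [Ring α] {S M r b : α}

theorem mul_jensenNenciu_eq_one (hS : S * S = S) (hr : (M + S) * r = 1)
    (hb : (S - S * r * S) * b = S) : M * (r + r * S * b * S * r) = 1 :=
  calc M * (r + r * S * b * S * r)
      = (M + S) * r * (1 + S * b * S * r) - S * r - S * r * S * b * S * r := by noncomm_ring
    _ = 1 + (S - S * r * S) * b * S * r - S * r := by rw [hr]; noncomm_ring
    _ = 1 := by rw [hb, hS, add_sub_cancel_right]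

theorem jensenNenciu_mul_eq_one (hS : S * S = S) (hr : r * (M + S) = 1)
    (hb : b * (S - S * r * S) = S) : (r + r * S * b * S * r) * M = 1 :=
  calc (r + r * S * b * S * r) * M
      = (1 + r * S * b * S) * (r * (M + S)) - r * S - r * S * b * S * r * S := by noncomm_ring
    _ = 1 + r * (S * (b * (S - S * r * S))) - r * S := by rw [hr]; noncomm_ring
    _ = 1 := by rw [hb, hS, add_sub_cancel_right]

end JensenNenciu

theorem stmt_12_general {H : Type*} [NormedAddCommGroup H] [InnerProductSpace ℂ H]
    (S M : H →L[ℂ] H) (hS : S * S = S) (hMS : IsUnit (M + S))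
    (Binv : H →L[ℂ] H)
    (hBinv₁ : Binv * (S - S * Ring.inverse (M + S) * S) = S)
    (hBinv₂ : (S - S * Ring.inverse (M + S) * S) * Binv = S) :
    IsUnit M ∧
      Ring.inverse M = Ring.inverse (M + S) +
        Ring.inverse (M + S) * S * Binv * S * Ring.inverse (M + S) := by
  let u : (H →L[ℂ] H)ˣ :=
    ⟨M, _, mul_jensenNenciu_eq_one hS (Ring.mul_inverse_cancel _ hMS) hBinv₂,
      jensenNenciu_mul_eq_one hS (Ring.inverse_mul_cancel _ hMS) hBinv₁⟩
  exact ⟨u.isUnit, Ring.inverse_unit u⟩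

/-- Jensen–Nenciu inversion formula: let `S` be a bounded projection on a Hilbert
space `H`, `M` bounded with `M + S` invertible, and set `B = S − S(M+S)⁻¹S`
(viewed on the range of `S`).  If `B` has an inverse `Binv` on `SH` (i.e.
`Binv = S Binv S`, `Binv B = B Binv = S` on `SH`), then `M` is invertible and
`M⁻¹ = (M+S)⁻¹ + (M+S)⁻¹ S B⁻¹ S (M+S)⁻¹`. -/
theorem stmt_12 {H : Type*} [NormedAddCommGroup H] [InnerProductSpace ℂ H] [CompleteSpace H]
    (S M : H →L[ℂ] H) (hS : S * S = S) (hMS : IsUnit (M + S))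
    (Binv : H →L[ℂ] H)
    (hBrange : S * Binv = Binv) (hBrange' : Binv * S = Binv)
    (hBinv₁ : Binv * (S - S * Ring.inverse (M + S) * S) = S)
    (hBinv₂ : (S - S * Ring.inverse (M + S) * S) * Binv = S) :
    IsUnit M ∧
      Ring.inverse M = Ring.inverse (M + S) +
        Ring.inverse (M + S) * S * Binv * S * Ring.inverse (M + S) :=
  stmt_12_general S M hS hMS Binv hBinv₁ hBinv₂
end

section
/- Let n ≥ 1 and β > n. Then the function (x,y) ↦ ⟨x⟩^{−β/2} |x−y|^{s} ⟨y⟩^{−β/2} is in L²(ℝⁿ × ℝⁿ) for every 0 ≤ s < (β−n)/2; in particular, for s = {n/2} + 3/2 and β > n + 3 the corresponding operator is Hilbert–Schmidt on L²(ℝⁿ). -/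
/-!
Since `‖x - y‖² ≤ 2 ⟨x⟩² ⟨y⟩²`, the square of the kernel is dominated by
`2^s ⟨x⟩^{-(β - 2s)} ⟨y⟩^{-(β - 2s)}`, a product of two functions of the form `⟨·⟩^{-r}` with
`r = β - 2s` larger than the dimension, each of which is integrable.
-/

open MeasureTheory Real Module

section Seminormed

variable {E : Type*} [SeminormedAddCommGroup E]

theorem norm_sub_sq_le_two_mul_one_add_sq (x y : E) :
    ‖x - y‖ ^ 2 ≤ 2 * (1 + ‖x‖ ^ 2) * (1 + ‖y‖ ^ 2) := by
  have h := norm_sub_le x y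
  nlinarith [norm_nonneg (x - y), sq_nonneg (‖x‖ - ‖y‖),
    mul_nonneg (sq_nonneg ‖x‖) (sq_nonneg ‖y‖)]

theorem norm_sub_rpow_two_mul_le (x y : E) {s : ℝ} (hs : 0 ≤ s) :
    ‖x - y‖ ^ (2 * s) ≤ 2 ^ s * (1 + ‖x‖ ^ 2) ^ s * (1 + ‖y‖ ^ 2) ^ s := by
  rw [rpow_mul (norm_nonneg _), ← mul_rpow (by positivity) (by positivity),
    ← mul_rpow (by positivity) (by positivity), rpow_two]
  exact rpow_le_rpow (by positivity) (norm_sub_sq_le_two_mul_one_add_sq x y) hs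

/-- `(1 + ‖x‖²)^{-β/4} = ⟨x⟩^{-β/2}`. -/
noncomputable def weightedDistKernel (β s : ℝ) (z : E × E) : ℝ :=
  (1 + ‖z.1‖ ^ 2) ^ (-β / 4) * ‖z.1 - z.2‖ ^ s * (1 + ‖z.2‖ ^ 2) ^ (-β / 4)

theorem continuous_weightedDistKernel (β : ℝ) {s : ℝ} (hs : 0 ≤ s) :
    Continuous (weightedDistKernel (E := E) β s) := by
  unfold weightedDistKernel
  refine .mul (.mul ?_ ?_) ?_
  · exact .rpow_const (by fun_prop) fun _ => .inl (by positivity)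
  · exact .rpow_const (by fun_prop) fun _ => .inr hs
  · exact .rpow_const (by fun_prop) fun _ => .inl (by positivity)

theorem weightedDistKernel_sq_le (β : ℝ) {s : ℝ} (hs : 0 ≤ s) (x y : E) :
    weightedDistKernel β s (x, y) ^ 2 ≤
      2 ^ s * (1 + ‖x‖ ^ 2) ^ (-(β - 2 * s) / 2) * (1 + ‖y‖ ^ 2) ^ (-(β - 2 * s) / 2) := by
  have hx : 0 < 1 + ‖x‖ ^ 2 := by positivity
  have hy : 0 < 1 + ‖y‖ ^ 2 := by positivity
  have hsq : weightedDistKernel β s (x, y) ^ 2 =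
      (1 + ‖x‖ ^ 2) ^ (-β / 2) * ‖x - y‖ ^ (2 * s) * (1 + ‖y‖ ^ 2) ^ (-β / 2) := by
    simp only [weightedDistKernel, mul_pow, ← rpow_mul_natCast hx.le,
      ← rpow_mul_natCast hy.le, ← rpow_mul_natCast (norm_nonneg _)]
    ring_nf
  calc weightedDistKernel β s (x, y) ^ 2
      ≤ (1 + ‖x‖ ^ 2) ^ (-β / 2) * (2 ^ s * (1 + ‖x‖ ^ 2) ^ s * (1 + ‖y‖ ^ 2) ^ s) *
          (1 + ‖y‖ ^ 2) ^ (-β / 2) := by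
        rw [hsq]
        gcongr
        exact norm_sub_rpow_two_mul_le x y hs
    _ = 2 ^ s * (1 + ‖x‖ ^ 2) ^ (-(β - 2 * s) / 2) * (1 + ‖y‖ ^ 2) ^ (-(β - 2 * s) / 2) := by
        rw [show -(β - 2 * s) / 2 = -β / 2 + s by ring, rpow_add hx, rpow_add hy]
        ring

end Seminormed

theorem memLp_two_weightedDistKernel {E : Type*} [NormedAddCommGroup E] [NormedSpace ℝ E]
    [FiniteDimensional ℝ E] [MeasurableSpace E] [BorelSpace E] (μ : Measure E)
    [μ.IsAddHaarMeasure] {β s : ℝ} (hs₀ : 0 ≤ s) (hs : (finrank ℝ E : ℝ) < β - 2 * s) :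
    MemLp (weightedDistKernel β s) 2 (μ.prod μ) := by
  have hmeas := (continuous_weightedDistKernel β hs₀).aestronglyMeasurable (μ := μ.prod μ)
  rw [memLp_two_iff_integrable_sq hmeas]
  have hint := integrable_rpow_neg_one_add_norm_sq (μ := μ) hs
  refine ((hint.const_mul (2 ^ s)).mul_prod hint).mono' (hmeas.pow 2) (.of_forall fun z => ?_)
  rw [norm_of_nonneg (sq_nonneg _)]
  exact weightedDistKernel_sq_le β hs₀ z.1 z.2

theorem stmt_15_general (n : ℕ) (β s : ℝ)
    (hs₀ : 0 ≤ s) (hs : s < (β - n) / 2) :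
    MemLp (fun z : EuclideanSpace ℝ (Fin n) × EuclideanSpace ℝ (Fin n) =>
        (1 + ‖z.1‖ ^ 2) ^ (-β / 4) * ‖z.1 - z.2‖ ^ s * (1 + ‖z.2‖ ^ 2) ^ (-β / 4))
      2 volume := by
  rw [Measure.volume_eq_prod]
  exact memLp_two_weightedDistKernel volume hs₀ (by rw [finrank_euclideanSpace_fin]; linarith)

/-- For `β > n` and `0 ≤ s < (β−n)/2`, the function
`(x,y) ↦ ⟨x⟩^{−β/2} |x−y|^{s} ⟨y⟩^{−β/2}` is in `L²(ℝⁿ × ℝⁿ)`. -/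
theorem stmt_15 (n : ℕ) (β s : ℝ) (hn : 1 ≤ n) (hβ : (n : ℝ) < β)
    (hs₀ : 0 ≤ s) (hs : s < (β - n) / 2) :
    MemLp (fun z : EuclideanSpace ℝ (Fin n) × EuclideanSpace ℝ (Fin n) =>
        (1 + ‖z.1‖ ^ 2) ^ (-β / 4) * ‖z.1 - z.2‖ ^ s * (1 + ‖z.2‖ ^ 2) ^ (-β / 4))
      2 volume :=
  stmt_15_general n β s hs₀ hs
end
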